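/- Let g = End(V). The second scalar curvature functional Ω ↦ ⟨Ω, Id⊗conj(Id)⟩_tr on Sym^{1,1}(g) satisfies: for every Ω ∈ Sym^{1,1}(g) and every v ∈ g, ⟨ad_v Ω, Id⊗conj(Id)⟩_tr = 0 and ⟨Ω^#, Id⊗conj(Id)⟩_tr = 0; consequently, for Ω, v, and A = Σ_i a_i⊗conj(a_i) as in the HCF reaction ODE, ⟨Ω² + Ω^# + ad_v Ω + A, Id⊗conj(Id)⟩_tr ≥ 0. -/

import Mathlib

open Matrix Finset

theorem second_scalar_curvature_reaction_nonneg_general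
    {n N K : ℕ} (lam : Fin N → ℝ) (v : Fin N → Matrix (Fin n) (Fin n) ℂ)
    (a : Fin K → Matrix (Fin n) (Fin n) ℂ) :
    (∀ w : Matrix (Fin n) (Fin n) ℂ,
      ∑ i, (lam i : ℂ) *
        ((⁅w, v i⁆ * (1 : Matrix (Fin n) (Fin n) ℂ)).trace *
            (starRingEnd ℂ) ((v i * (1 : Matrix (Fin n) (Fin n) ℂ)).trace) +
         (v i * (1 : Matrix (Fin n) (Fin n) ℂ)).trace *
            (starRingEnd ℂ) ((⁅w, v i⁆ * (1 : Matrix (Fin n) (Fin n) ℂ)).trace)) = 0) ∧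
    (∑ i, ∑ j, if i < j then
        lam i * lam j *
          ‖((⁅v i, v j⁆ * (1 : Matrix (Fin n) (Fin n) ℂ)).trace)‖ ^ 2
      else 0) = 0 ∧
    ∀ w : Matrix (Fin n) (Fin n) ℂ,
      0 ≤ (∑ i, lam i ^ 2 *
            ‖((v i * (1 : Matrix (Fin n) (Fin n) ℂ)).trace)‖ ^ 2)
        + (∑ i, ∑ j, if i < j then
            lam i * lam j *
              ‖((⁅v i, v j⁆ * (1 : Matrix (Fin n) (Fin n) ℂ)).trace)‖ ^ 2
          else 0)
        + (∑ i, lam i * (2 * ((⁅w, v i⁆ * (1 : Matrix (Fin n) (Fin n) ℂ)).trace *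
            (starRingEnd ℂ) ((v i * (1 : Matrix (Fin n) (Fin n) ℂ)).trace)).re))
        + (∑ i, ‖((a i * (1 : Matrix (Fin n) (Fin n) ℂ)).trace)‖ ^ 2) := by
  -- Commutators are traceless, so every pairing of one with `Id` vanishes and a sum of squares remains.
  refine ⟨fun w => by simp, by simp, fun w => ?_⟩
  simp only [Matrix.mul_one, LieAlgebra.matrix_trace_commutator_zero, zero_mul, Complex.zero_re,
    mul_zero, norm_zero, ne_eq, OfNat.ofNat_ne_zero, not_false_eq_true, zero_pow, ite_self,
    sum_const_zero, add_zero]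
  positivity

/-- for `Ω = Σ_i λ_i v_i⊗conj(v_i) ∈ Sym^{1,1}(g)`, `g = End(V)`, the
second scalar curvature functional `Ω ↦ ⟨Ω, Id⊗conj(Id)⟩_tr` satisfies
`⟨ad_w Ω, Id⊗conj(Id)⟩_tr = 0` for every `w ∈ g` and `⟨Ω^#, Id⊗conj(Id)⟩_tr = 0`;
consequently, for any `w ∈ g` and `A = Σ_i a_i⊗conj(a_i)`,
`⟨Ω² + Ω^# + ad_w Ω + A, Id⊗conj(Id)⟩_tr ≥ 0`. -/
theorem second_scalar_curvature_reaction_nonneg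
    {n N K : ℕ} (lam : Fin N → ℝ) (v : Fin N → Matrix (Fin n) (Fin n) ℂ)
    (horth : ∀ i j, ((v i * (v j)ᴴ).trace).re = if i = j then 1 else 0)
    (a : Fin K → Matrix (Fin n) (Fin n) ℂ) :
    (∀ w : Matrix (Fin n) (Fin n) ℂ,
      ∑ i, (lam i : ℂ) *
        ((⁅w, v i⁆ * (1 : Matrix (Fin n) (Fin n) ℂ)).trace *
            (starRingEnd ℂ) ((v i * (1 : Matrix (Fin n) (Fin n) ℂ)).trace) +
         (v i * (1 : Matrix (Fin n) (Fin n) ℂ)).trace *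
            (starRingEnd ℂ) ((⁅w, v i⁆ * (1 : Matrix (Fin n) (Fin n) ℂ)).trace)) = 0) ∧
    (∑ i, ∑ j, if i < j then
        lam i * lam j *
          ‖((⁅v i, v j⁆ * (1 : Matrix (Fin n) (Fin n) ℂ)).trace)‖ ^ 2
      else 0) = 0 ∧
    ∀ w : Matrix (Fin n) (Fin n) ℂ,
      0 ≤ (∑ i, lam i ^ 2 *
            ‖((v i * (1 : Matrix (Fin n) (Fin n) ℂ)).trace)‖ ^ 2)
        + (∑ i, ∑ j, if i < j then
            lam i * lam j *
              ‖((⁅v i, v j⁆ * (1 : Matrix (Fin n) (Fin n) ℂ)).trace)‖ ^ 2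
          else 0)
        + (∑ i, lam i * (2 * ((⁅w, v i⁆ * (1 : Matrix (Fin n) (Fin n) ℂ)).trace *
            (starRingEnd ℂ) ((v i * (1 : Matrix (Fin n) (Fin n) ℂ)).trace)).re))
        + (∑ i, ‖((a i * (1 : Matrix (Fin n) (Fin n) ℂ)).trace)‖ ^ 2) :=
  second_scalar_curvature_reaction_nonneg_general lam v a
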